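/- Fix A ∈ ℂ and define u(t,n) = A·i^{-n}·e^{-2it}·J_n(1-2t) for t ∈ ℝ and n ∈ ℤ. Then u satisfies the free discrete Schrödinger equation ∂_t u(t,n) = i(u(t,n+1) + u(t,n-1) - 2u(t,n)) for all t ∈ ℝ and n ∈ ℤ. -/

import Mathlib

noncomputable section

/-- Bessel function of the first kind of nonnegative integer order:
`J_n(x) = Σ_{m=0}^∞ (-1)^m/(m!·(m+n)!)·(x/2)^{2m+n}`. -/
def besselJnat (n : ℕ) (x : ℝ) : ℝ :=
  ∑' m : ℕ, ((-1 : ℝ) ^ m / (Nat.factorial m * Nat.factorial (m + n))) * (x / 2) ^ (2 * m + n)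

/-- Bessel function of integer order, with `J_{-n}(x) = (-1)^n J_n(x)`. -/
def besselJ (n : ℤ) (x : ℝ) : ℝ :=
  if 0 ≤ n then besselJnat n.toNat x
  else (-1 : ℝ) ^ (-n).toNat * besselJnat (-n).toNat x

/-- The explicit solution `u(t,n) = A i^{-n} e^{-2it} J_n(1-2t)`. -/
def uBessel (A : ℂ) (t : ℝ) (n : ℤ) : ℂ :=
  A * Complex.I ^ (-n) * Complex.exp (-2 * Complex.I * (t : ℂ)) * (besselJ n (1 - 2 * t) : ℂ)

/-!
On `|x| < R` the terms of the Bessel series of order `n` are dominated by `(R/2)^(2m+n)/m!`, and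
so, up to index shifts, are those of its termwise derivative; hence the series may be
differentiated term by term. The derivative of `(-1)^m (x/2)^(2m+n) / (m! (m+n)!)` splits,
through `2m+n = (m+n) + m`, into half a term of `J_(n-1)` minus half a term of `J_(n+1)`, which
gives `2 J_n' = J_(n-1) - J_(n+1)` for `n ≥ 0`, and then for all `n` by `J_(-n) = (-1)^n J_n`.
Since `i^(-(n±1)) = ∓ i · i^(-n)`, the right-hand side of the Schrödinger equation is
`A i^(-n) e^(-2it) (J_(n+1) - J_(n-1) - 2i J_n)(1-2t)`, the product-rule derivative of `u`.
-/

open scoped Nat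

theorem hasDerivAt_tsum_of_bounded_on_balls {F : Type*} [NormedAddCommGroup F]
    [NormedSpace ℝ F] [CompleteSpace F] {f f' : ℕ → ℝ → F}
    (hf : ∀ m y, HasDerivAt (f m) (f' m y) y)
    (hf' : ∀ R : ℝ, ∃ u : ℕ → ℝ, Summable u ∧ ∀ m y, ‖y‖ < R → ‖f' m y‖ ≤ u m)
    {x : ℝ} (hx : Summable (f · x)) :
    HasDerivAt (fun y => ∑' m, f m y) (∑' m, f' m x) x := by
  obtain ⟨u, hu, hbound⟩ := hf' (‖x‖ + 1)
  have hx_mem : x ∈ Metric.ball (0 : ℝ) (‖x‖ + 1) := by simp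
  exact hasDerivAt_tsum_of_isPreconnected hu Metric.isOpen_ball
    (convex_ball _ _).isPreconnected (fun m y _ => hf m y)
    (fun m y hy => hbound m y (by simpa using hy)) hx_mem hx hx_mem

def besselTerm (n m : ℕ) (x : ℝ) : ℝ :=
  (-1 : ℝ) ^ m / (m ! * (m + n)!) * (x / 2) ^ (2 * m + n)

theorem besselJnat_eq_tsum (n : ℕ) (x : ℝ) : besselJnat n x = ∑' m, besselTerm n m x := rfl

theorem abs_besselTerm_le (n m : ℕ) {x Q : ℝ} (hQ : |x / 2| ≤ Q) :
    |besselTerm n m x| ≤ Q ^ (2 * m + n) / m ! := by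
  have hQ₀ : 0 ≤ Q := (abs_nonneg _).trans hQ
  have hfac : (m ! : ℝ) ≤ m ! * (m + n)! :=
    le_mul_of_one_le_right (by positivity) (by exact_mod_cast (m + n).factorial_pos)
  rw [besselTerm, abs_mul, abs_div, abs_pow, abs_pow, abs_neg, abs_one, one_pow,
    abs_of_pos (by positivity), one_div_mul_eq_div]
  exact div_le_div₀ (by positivity) (pow_le_pow_left₀ (abs_nonneg _) hQ _) (by positivity) hfac

theorem summable_pow_two_mul_add_div_factorial (n : ℕ) (Q : ℝ) :
    Summable fun m : ℕ => Q ^ (2 * m + n) / m ! :=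
  ((Real.summable_pow_div_factorial (Q ^ 2)).mul_right (Q ^ n)).congr fun m => by
    rw [pow_add, pow_mul]; ring

theorem summable_besselTerm (n : ℕ) (x : ℝ) : Summable (besselTerm n · x) :=
  .of_norm_bounded (summable_pow_two_mul_add_div_factorial n |x / 2|)
    fun m => abs_besselTerm_le n m le_rfl

theorem exists_summable_bound_besselTerm (n : ℕ) (R : ℝ) :
    ∃ u : ℕ → ℝ, Summable u ∧ ∀ m y, |y| < R → |besselTerm n m y| ≤ u m :=
  ⟨_, summable_pow_two_mul_add_div_factorial n (R / 2), fun m y hy =>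
    abs_besselTerm_le n m (by rw [abs_div, abs_two]; linarith)⟩

theorem hasDerivAt_besselTerm (n m : ℕ) (x : ℝ) :
    HasDerivAt (besselTerm n m)
      ((-1 : ℝ) ^ m / (m ! * (m + n)!) *
        ((2 * m + n : ℕ) * (x / 2) ^ (2 * m + n - 1) / 2)) x := by
  have h := (((hasDerivAt_id' x).div_const 2).fun_pow (2 * m + n)).const_mul
    ((-1 : ℝ) ^ m / (m ! * (m + n)!))
  exact h.congr_deriv (by ring)

theorem hasDerivAt_besselTerm_succ_succ (n m : ℕ) (x : ℝ) :
    HasDerivAt (besselTerm (n + 1) (m + 1))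
      ((besselTerm n (m + 1) x - besselTerm (n + 2) m x) / 2) x := by
  convert hasDerivAt_besselTerm (n + 1) (m + 1) x using 1
  rw [show 2 * (m + 1) + (n + 1) - 1 = 2 * m + n + 2 by omega]
  simp only [besselTerm, Nat.factorial_succ, show m + 1 + n = m + n + 1 by ring,
    show m + (n + 2) = m + n + 1 + 1 by ring, show m + 1 + (n + 1) = m + n + 1 + 1 by ring,
    show 2 * (m + 1) + n = 2 * m + n + 2 by ring, show 2 * m + (n + 2) = 2 * m + n + 2 by ring]
  push_cast
  field_simp
  ring

theorem hasDerivAt_besselTerm_succ_zero (n : ℕ) (x : ℝ) :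
    HasDerivAt (besselTerm (n + 1) 0) (besselTerm n 0 x / 2) x := by
  convert hasDerivAt_besselTerm (n + 1) 0 x using 1
  simp [besselTerm, Nat.factorial_succ]
  field_simp

theorem hasDerivAt_besselTerm_zero_succ (m : ℕ) (x : ℝ) :
    HasDerivAt (besselTerm 0 (m + 1)) (-besselTerm 1 m x) x := by
  convert hasDerivAt_besselTerm 0 (m + 1) x using 1
  rw [show 2 * (m + 1) + 0 - 1 = 2 * m + 1 by omega]
  simp [besselTerm, Nat.factorial_succ]
  field_simp
  ring

theorem besselJnat_eq_add_tsum (n : ℕ) :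
    besselJnat n = fun x => besselTerm n 0 x + ∑' m, besselTerm n (m + 1) x :=
  funext fun x => (summable_besselTerm n x).tsum_eq_zero_add

theorem hasDerivAt_besselJnat_succ (n : ℕ) (x : ℝ) :
    HasDerivAt (besselJnat (n + 1)) ((besselJnat n x - besselJnat (n + 2) x) / 2) x := by
  have hseries : HasDerivAt (fun y => ∑' m, besselTerm (n + 1) (m + 1) y)
      (∑' m, (besselTerm n (m + 1) x - besselTerm (n + 2) m x) / 2) x := by
    refine hasDerivAt_tsum_of_bounded_on_balls (hasDerivAt_besselTerm_succ_succ n)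
      (fun R => ?_) ((summable_nat_add_iff 1).2 (summable_besselTerm _ x))
    obtain ⟨u, hu, hbu⟩ := exists_summable_bound_besselTerm n R
    obtain ⟨v, hv, hbv⟩ := exists_summable_bound_besselTerm (n + 2) R
    refine ⟨fun m => u (m + 1) + v m, ((summable_nat_add_iff 1).2 hu).add hv, fun m y hy => ?_⟩
    set a := besselTerm n (m + 1) y
    set b := besselTerm (n + 2) m y
    rw [Real.norm_eq_abs, abs_div, abs_two]
    linarith [abs_sub a b, abs_nonneg (a - b), hbu (m + 1) y hy, hbv m y hy]
  rw [besselJnat_eq_add_tsum (n + 1)]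
  refine ((hasDerivAt_besselTerm_succ_zero n x).add hseries).congr_deriv ?_
  rw [tsum_div_const, ((summable_nat_add_iff 1).2 (summable_besselTerm n x)).tsum_sub
    (summable_besselTerm (n + 2) x), besselJnat_eq_tsum (n + 2),
    congrFun (besselJnat_eq_add_tsum n) x]
  ring

theorem hasDerivAt_besselJnat_zero (x : ℝ) :
    HasDerivAt (besselJnat 0) (-besselJnat 1 x) x := by
  have hseries : HasDerivAt (fun y => ∑' m, besselTerm 0 (m + 1) y)
      (∑' m, -besselTerm 1 m x) x := by
    refine hasDerivAt_tsum_of_bounded_on_balls hasDerivAt_besselTerm_zero_succ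
      (fun R => ?_) ((summable_nat_add_iff 1).2 (summable_besselTerm _ x))
    obtain ⟨u, hu, hbu⟩ := exists_summable_bound_besselTerm 1 R
    exact ⟨u, hu, fun m y hy => by simpa using hbu m y hy⟩
  rw [besselJnat_eq_add_tsum 0]
  refine ((hasDerivAt_besselTerm 0 0 x).add hseries).congr_deriv ?_
  simp [tsum_neg, besselJnat_eq_tsum]

theorem besselJ_natCast (n : ℕ) (x : ℝ) : besselJ n x = besselJnat n x := by
  simp [besselJ]

theorem besselJ_neg_natCast (n : ℕ) (x : ℝ) : besselJ (-n) x = (-1) ^ n * besselJnat n x := by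
  rcases n.eq_zero_or_pos with rfl | hn
  · simp [besselJ]
  · simp [besselJ, hn.ne']

theorem besselJ_neg (n : ℤ) (x : ℝ) : besselJ (-n) x = (-1) ^ n * besselJ n x := by
  obtain ⟨k, rfl | rfl⟩ := n.eq_nat_or_neg
  · rw [besselJ_neg_natCast, besselJ_natCast, zpow_natCast]
  · rw [neg_neg, besselJ_neg_natCast, besselJ_natCast, ← mul_assoc, zpow_neg, zpow_natCast,
      inv_mul_cancel₀ (pow_ne_zero _ (neg_ne_zero.2 one_ne_zero)), one_mul]

theorem hasDerivAt_besselJ_natCast (n : ℕ) (x : ℝ) :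
    HasDerivAt (besselJ n) ((besselJ (n - 1) x - besselJ (n + 1) x) / 2) x := by
  have hfun : besselJ n = besselJnat n := funext (besselJ_natCast n)
  rcases n with _ | n
  · refine hfun ▸ (hasDerivAt_besselJnat_zero x).congr_deriv ?_
    have hpos := besselJ_natCast 1 x
    have hneg := besselJ_neg_natCast 1 x
    push_cast at hpos hneg ⊢
    rw [hpos, hneg]
    ring
  · refine hfun ▸ (hasDerivAt_besselJnat_succ n x).congr_deriv ?_
    push_cast
    rw [add_sub_cancel_right, besselJ_natCast,
      show (n : ℤ) + 1 + 1 = ((n + 2 : ℕ) : ℤ) by push_cast; ring, besselJ_natCast]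

theorem hasDerivAt_besselJ (n : ℤ) (x : ℝ) :
    HasDerivAt (besselJ n) ((besselJ (n - 1) x - besselJ (n + 1) x) / 2) x := by
  obtain ⟨k, rfl | rfl⟩ := n.eq_nat_or_neg
  · exact hasDerivAt_besselJ_natCast k x
  · have hfun : besselJ (-k) = fun y => (-1) ^ (k : ℤ) * besselJ k y := funext (besselJ_neg k)
    rw [hfun]
    refine ((hasDerivAt_besselJ_natCast k x).const_mul _).congr_deriv ?_
    rw [show -(k : ℤ) - 1 = -(k + 1) by ring, show -(k : ℤ) + 1 = -(k - 1) by ring, besselJ_neg,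
      besselJ_neg, zpow_add_one₀ (by norm_num), zpow_sub_one₀ (by norm_num)]
    ring

/-- `u(t,n) = A i^{-n} e^{-2it} J_n(1-2t)` satisfies the free discrete
Schrödinger equation `∂_t u(t,n) = i(u(t,n+1) + u(t,n-1) - 2u(t,n))`. -/
theorem uBessel_solves_free_schrodinger (A : ℂ) (t : ℝ) (n : ℤ) :
    HasDerivAt (fun s : ℝ => uBessel A s n)
      (Complex.I * (uBessel A t (n + 1) + uBessel A t (n - 1) - 2 * uBessel A t n)) t := by
  have hJ : HasDerivAt (fun s : ℝ => (besselJ n (1 - 2 * s) : ℂ))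
      ((besselJ (n + 1) (1 - 2 * t) - besselJ (n - 1) (1 - 2 * t) : ℝ) : ℂ) t := by
    have hlin : HasDerivAt (fun s : ℝ => 1 - 2 * s) (-2) t := by
      simpa using ((hasDerivAt_id t).const_mul 2).const_sub 1
    exact (((hasDerivAt_besselJ n _).comp t hlin).congr_deriv (by ring)).ofReal_comp
  have hexp : HasDerivAt (fun s : ℝ => Complex.exp (-2 * Complex.I * s))
      (Complex.exp (-2 * Complex.I * t) * (-2 * Complex.I)) t := by
    simpa using ((hasDerivAt_id t).ofReal_comp.const_mul (-2 * Complex.I)).cexp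
  refine (((hexp.mul hJ).const_mul (A * Complex.I ^ (-n))).congr_deriv ?_).congr_of_eventuallyEq
    (.of_forall fun s => by simp only [uBessel, Pi.mul_apply]; ring)
  simp only [uBessel, show -(n + 1) = -n - 1 by ring, show -(n - 1) = -n + 1 by ring,
    zpow_sub_one₀ Complex.I_ne_zero, zpow_add_one₀ Complex.I_ne_zero, Complex.inv_I]
  push_cast
  ring_nf
  rw [Complex.I_sq]
  ring
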